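/- If ordered tree T' with k+1 vertices satisfies p(T') = T, then T' = C(T, rpl(T')); in particular every child of T in the family tree equals C(T,i) for some 1 ≤ i ≤ rpl(T)+1. -/
import Mathlib


/-- An ordered (plane) tree: a root together with the list of subtrees of its
children.  The children are listed **rightmost first** (so the head of the
list is the rightmost child). -/
inductive OTree : Type
  | node : List OTree → OTree

namespace OTree

-- Number of vertices of an ordered tree.
mutual
  def size : OTree → ℕ
    | .node ts => 1 + sizeAux ts
  def sizeAux : List OTree → ℕ
    | [] => 0
    | t :: ts => size t + sizeAux ts
end

/-- `rpl T` is the number of edges of the rightmost path of `T`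
(the path from the root that always follows the rightmost child). -/
def rpl : OTree → ℕ
  | .node [] => 0
  | .node (t :: _) => 1 + rpl t

/-- `p T` removes the rightmost leaf of `T` (the endpoint of the rightmost
path).  On the one-vertex tree it is the identity (junk value). -/
def p : OTree → OTree
  | .node [] => .node []
  | .node (.node [] :: ts) => .node ts
  | .node (.node (c :: cs) :: ts) => .node (p (.node (c :: cs)) :: ts)

/-- `C T i` appends a new leaf as the rightmost child of the vertex at
level `i` on the rightmost path of `T` (the root has level 1).
Junk values are returned when `i = 0` or `i` exceeds `rpl T + 1`. -/
def C : OTree → ℕ → OTree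
  | t, 0 => t
  | .node ts, 1 => .node (.node [] :: ts)
  | .node [], _ + 2 => .node []
  | .node (t :: ts), n + 2 => .node (C t (n + 1) :: ts)

/-- The number of children of the parent of the rightmost leaf
(junk value `0` on the one-vertex tree, which has no such parent). -/
def rmlParentDeg : OTree → ℕ
  | .node [] => 0
  | .node (.node [] :: ts) => ts.length + 1
  | .node (.node (c :: cs) :: _) => rmlParentDeg (.node (c :: cs))

/-- `T` has the pony-tail if the rightmost child of the root has exactly one
child, which is a leaf. -/
def ponyTail : OTree → Prop
  | .node (.node [.node []] :: _) => True
  | _ => False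

end OTree

/-- `AppendLeaf T T'` holds when `T'` is obtained from `T` by attaching one
new leaf to some vertex of `T`, at some position among its children. -/
inductive AppendLeaf : OTree → OTree → Prop
  | root (l r : List OTree) :
      AppendLeaf (.node (l ++ r)) (.node (l ++ OTree.node [] :: r))
  | child (l r : List OTree) (t t' : OTree) :
      AppendLeaf t t' → AppendLeaf (.node (l ++ t :: r)) (.node (l ++ t' :: r))

/-- `DelApp T T'` holds when `T'` can be obtained from `T` by deleting one
leaf and then appending one new leaf somewhere (delete-and-append a leaf). -/
def DelApp (T T' : OTree) : Prop :=
  ∃ S : OTree, AppendLeaf S T ∧ AppendLeaf S T'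

/-- `CopyingAt T T' j` : `T` is copying `T'` at level `j`, i.e. `T'` is
obtained from `T` by appending a new leaf which becomes the rightmost leaf of
`T'` (namely forming `C T j`, whose rightmost path has `j` edges) and then
removing some other leaf. -/
def CopyingAt (T T' : OTree) (j : ℕ) : Prop :=
  T ≠ T' ∧ 1 ≤ j ∧ j ≤ T.rpl + 1 ∧ T'.rpl = j ∧ AppendLeaf T' (T.C j)

/-- `T` is copying `T'`. -/
def Copying (T T' : OTree) : Prop := ∃ j : ℕ, CopyingAt T T' j


lemma key_aux (n : ℕ) : ∀ t ts, OTree.size t ≤ n →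
    ((OTree.node (t::ts)).p.C (OTree.node (t::ts)).rpl = OTree.node (t::ts)) ∧
    (OTree.node (t::ts)).rpl ≤ (OTree.node (t::ts)).p.rpl + 1 := by
  induction n with
  | zero =>
    intro t ts h
    exfalso
    cases t with
    | node l => simp [OTree.size] at h
  | succ n ih =>
    intro t ts h
    cases t with
    | node l =>
      cases l with
      | nil =>
        constructor
        · simp [OTree.p, OTree.rpl, OTree.C]
        · simp [OTree.p, OTree.rpl]
      | cons c cs =>
        have hc : OTree.size c ≤ n := by
          simp [OTree.size, OTree.sizeAux] at h
          omega
        obtain ⟨h1, h2⟩ := ih c cs hc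
        constructor
        · have hr : (OTree.node (OTree.node (c::cs) :: ts)).rpl
              = c.rpl + 2 := by simp [OTree.rpl]; omega
          have hp : (OTree.node (OTree.node (c::cs) :: ts)).p
              = OTree.node ((OTree.node (c::cs)).p :: ts) := by
            cases c with
            | node l' => cases l' <;> simp [OTree.p]
          rw [hr, hp]
          have hC : (OTree.node ((OTree.node (c::cs)).p :: ts)).C (c.rpl + 2)
              = OTree.node (((OTree.node (c::cs)).p).C (c.rpl + 1) :: ts) := by
            rw [OTree.C]
          rw [hC]
          have : c.rpl + 1 = (OTree.node (c::cs)).rpl := by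
            simp [OTree.rpl]; omega
          rw [this, h1]
        · have hp : (OTree.node (OTree.node (c::cs) :: ts)).p
              = OTree.node ((OTree.node (c::cs)).p :: ts) := by
            cases c with
            | node l' => cases l' <;> simp [OTree.p]
          rw [hp]
          simp only [OTree.rpl] at h2 ⊢
          have : ∀ u : OTree, ∃ l, u.p = OTree.node l := by
            intro u; cases u with
            | node l' =>
              cases l' with
              | nil => exact ⟨[], rfl⟩
              | cons a as =>
                cases a with
                | node b => cases b <;> exact ⟨_, rfl⟩
          obtain ⟨l', hl'⟩ := this (OTree.node (c::cs))
          rw [hl'] at h2 ⊢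
          omega

/-- If an ordered tree `T'` with `k+1` vertices satisfies `p T' = T`, then
`T' = C T (rpl T')`; in particular every child of `T` in the family tree equals
`C T i` for some `1 ≤ i ≤ rpl T + 1`. -/
theorem stmt_7 (k : ℕ) (T T' : OTree) (hT : T.size = k)
    (hT' : T'.size = k + 1) (hp : T'.p = T) :
    T' = T.C T'.rpl ∧ 1 ≤ T'.rpl ∧ T'.rpl ≤ T.rpl + 1 := by
  cases T' with
  | node l =>
    cases l with
    | nil =>
      exfalso
      simp [OTree.p] at hp
      subst hp
      simp [OTree.size, OTree.sizeAux] at hT hT'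
      omega
    | cons t ts =>
      obtain ⟨h1, h2⟩ := key_aux t.size t ts le_rfl
      subst hp
      refine ⟨h1.symm, ?_, h2⟩
      simp [OTree.rpl]
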